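/- arXiv:2310.10668 — 2 statements merged into one kernel-verified Lean document; each statement's English description precedes it below -/
import Mathlib

section
/- Let G be a group, φ an endomorphism of G, and u, v ∈ G. If for all p ≥ 1, φ^p(v) is not conjugate to any element of v · ker(φ), and φ^{k+1}(u) is conjugate to φ(v), then for every p ≥ 1, φ^{k+p}(u) is not conjugate to v. -/
open scoped Pointwise

theorem stmt3 (G : Type*) [Group G] (φ : G →* G) (u v : G) (k : ℕ)
    (hv : ∀ p ≥ 1, ¬ ∃ w ∈ v • (φ.ker : Set G), ∃ g : G, w = g * (⇑φ)^[p] v * g⁻¹)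
    (hu : ∃ g : G, φ v = g * (⇑φ)^[k+1] u * g⁻¹) :
    ∀ p ≥ 1, ¬ ∃ g : G, v = g * (⇑φ)^[k+p] u * g⁻¹ := by
  intro p hp hex
  obtain ⟨g, hg⟩ := hex
  obtain ⟨h, hh⟩ := hu
  obtain ⟨q, rfl⟩ := Nat.exists_eq_add_of_le hp
  have hexp : k + (1 + q) = q + (k + 1) := by ring
  rw [hexp] at hg
  refine hv (1 + q) hp ⟨v, ⟨1, φ.ker.one_mem, mul_one v⟩, g * ((⇑φ)^[q] h)⁻¹, ?_⟩
  have h1 : (⇑φ)^[1+q] v = (⇑φ)^[q] h * (⇑φ)^[q+(k+1)] u * ((⇑φ)^[q] h)⁻¹ := by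
    rw [add_comm 1 q, Function.iterate_add_apply, Function.iterate_one, hh,
      iterate_map_mul, iterate_map_mul, iterate_map_inv,
      ← Function.iterate_add_apply]
  rw [h1, hg]
  group
end

section
/- Let G be a group, φ an endomorphism of G, and u, v ∈ G. Suppose φ^{k+1}(u) is conjugate to φ(v) and φ^{p+2}(v) is conjugate to φ(v) for some k, p ∈ ℕ. Then (∃ n ∈ ℕ, φ^n(u) is conjugate to v) if and only if (∃ i ≤ k + p + 1, φ^i(u) is conjugate to v). -/
def rconj {G : Type*} [Group G] (x y : G) : Prop := ∃ g : G, x = g * y * g⁻¹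

lemma rconj_refl {G : Type*} [Group G] (x : G) : rconj x x := ⟨1, by simp⟩

lemma rconj_symm {G : Type*} [Group G] {x y : G} : rconj x y → rconj y x := by
  rintro ⟨g, rfl⟩; exact ⟨g⁻¹, by group⟩

lemma rconj_trans {G : Type*} [Group G] {x y z : G} : rconj x y → rconj y z → rconj x z := by
  rintro ⟨g, rfl⟩ ⟨h, rfl⟩; exact ⟨g * h, by group⟩

lemma rconj_map {G : Type*} [Group G] (φ : G →* G) {x y : G} : rconj x y → rconj (φ x) (φ y) := by
  rintro ⟨g, rfl⟩; exact ⟨φ g, by simp⟩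

lemma rconj_iter {G : Type*} [Group G] (φ : G →* G) (m : ℕ) {x y : G} (h : rconj x y) :
    rconj ((⇑φ)^[m] x) ((⇑φ)^[m] y) := by
  induction m with
  | zero => simpa
  | succ n ih => simp only [Function.iterate_succ_apply']; exact rconj_map φ ih

theorem stmt7 (G : Type*) [Group G] (φ : G →* G) (u v : G) (k p : ℕ)
    (h1 : ∃ g : G, φ v = g * (⇑φ)^[k+1] u * g⁻¹)
    (h2 : ∃ g : G, φ v = g * (⇑φ)^[p+2] v * g⁻¹) :
    (∃ n : ℕ, ∃ g : G, v = g * (⇑φ)^[n] u * g⁻¹) ↔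
    (∃ i ≤ k + p + 1, ∃ g : G, v = g * (⇑φ)^[i] u * g⁻¹) := by
  constructor
  · rintro ⟨n, g, hg⟩
    -- key conjugacy: φ^[k+p+2] u ~ φ^[k+1] u
    have hk1 : rconj (φ v) ((⇑φ)^[k+1] u) := h1
    have hp2 : rconj (φ v) ((⇑φ)^[p+2] v) := h2
    have hiter : rconj ((⇑φ)^[p+1] (φ v)) ((⇑φ)^[p+1] ((⇑φ)^[k+1] u)) :=
      rconj_iter φ (p+1) hk1
    have e1 : (⇑φ)^[p+1] (φ v) = (⇑φ)^[p+2] v := by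
      rw [show φ v = (⇑φ)^[1] v from rfl, ← Function.iterate_add_apply]
    have e2 : (⇑φ)^[p+1] ((⇑φ)^[k+1] u) = (⇑φ)^[k+p+2] u := by
      rw [← Function.iterate_add_apply]
      ring_nf
    rw [e1, e2] at hiter
    have key : rconj ((⇑φ)^[k+p+2] u) ((⇑φ)^[k+1] u) :=
      rconj_trans (rconj_symm hiter) (rconj_trans (rconj_symm hp2) hk1)
    have main : ∀ n, ∃ i ≤ k+p+1, rconj ((⇑φ)^[n] u) ((⇑φ)^[i] u) := by
      intro n
      induction n using Nat.strong_induction_on with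
      | _ n ih =>
        by_cases hn : n ≤ k+p+1
        · exact ⟨n, hn, rconj_refl _⟩
        · push_neg at hn
          have h3 : n - (p+1) < n := by omega
          obtain ⟨i, hi, hri⟩ := ih (n - (p+1)) h3
          refine ⟨i, hi, rconj_trans ?_ hri⟩
          have h4 := rconj_iter φ (n - (k+p+2)) key
          have e3 : n - (k+p+2) + (k+p+2) = n := by omega
          have e4 : n - (k+p+2) + (k+1) = n - (p+1) := by omega
          rw [← Function.iterate_add_apply, ← Function.iterate_add_apply, e3, e4] at h4
          exact h4
    obtain ⟨i, hi, hri⟩ := main n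
    obtain ⟨g', hg'⟩ := rconj_trans (⟨g, hg⟩ : rconj v ((⇑φ)^[n] u)) hri
    exact ⟨i, hi, g', hg'⟩
  · rintro ⟨i, _, g, hg⟩
    exact ⟨i, g, hg⟩
end
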